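/- arXiv:1310.1386 — 2 statements merged into one kernel-verified Lean document; each statement's English description precedes it below -/
import Mathlib

section
/- For every integer r ≥ 3 there exists N such that for every natural number n ≥ N with (r-1) dividing (n+1), there exists a surjective colouring Δ: ℕ^(r) ↠ [k] with k = Σ_{i=0}^{r} C(n,i) + 1 such that every m' ∈ F_Δ with m' < k satisfies m' ≤ Σ_{i=0}^{r} C(n-1,i); in particular F_Δ ∩ ( Σ_{i=0}^{r} C(n-1,i), Σ_{i=0}^{r} C(n,i) ] = ∅. -/
/-!
Colour an `r`-set `e ⊆ ℕ` by its trace on `{0, …, n}` when that trace belongs to a fixed family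
`𝒜` of subsets of `{0, …, n}`, and by one extra colour otherwise. For infinite `X`, `γ(X)` is one
more than the number of members of `𝒜` inside `X`: it is `|𝒜| + 1` when `X ⊇ {0, …, n}`, and if
`X` misses a point `v`, it is at most `|𝒜| + 1 - deg v`.

Identify `{0, …, n}` with `ℤ/(n+1)` and let `𝒜` consist of all `r`-sets together with
`∑_{i<r-1} C(n,i)` sets of size `r - 1`, so that `|𝒜| = ∑_{i≤r} C(n,i)`. A translation-invariant
family covers every point equally often, so taking the `(r - 1)`-sets to be whole translation
orbits plus part of one more orbit (for `r = 3`: the edges `{x, x + 1}` of the cycle) makes every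
degree large enough to force `γ(X) ≤ ∑_{i≤r} C(n-1,i)` whenever `X` misses a point.
-/

open Finset

/-- The set of colours attained by `Δ` on `r`-element subsets of `X`. -/
def coloursOn {α : Type*} (r : ℕ) (Δ : Finset ℕ → α) (X : Set ℕ) : Set α :=
  Δ '' {e : Finset ℕ | ↑e ⊆ X ∧ e.card = r}

/-- `γ(X)`: the number of colours attained by `Δ` on `r`-element subsets of `X`. -/
noncomputable def gamma {α : Type*} (r : ℕ) (Δ : Finset ℕ → α) (X : Set ℕ) : ℕ :=
  (coloursOn r Δ X).ncard

/-- `F_Δ`: the set of values `γ(X)` over infinite subsets `X ⊆ ℕ`. -/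
def Fdelta {α : Type*} (r : ℕ) (Δ : Finset ℕ → α) : Set ℕ :=
  {m | ∃ X : Set ℕ, X.Infinite ∧ gamma r Δ X = m}

/-- `Δ` is a surjective colouring of `ℕ^(r)`, the `r`-element subsets of `ℕ`,
onto the colour set `[k] = {1, …, k}`. -/
def IsColouring (r k : ℕ) (Δ : Finset ℕ → ℕ) : Prop :=
  (∀ e : Finset ℕ, e.card = r → Δ e ∈ Finset.Icc 1 k) ∧
  ∀ c ∈ Finset.Icc 1 k, ∃ e : Finset ℕ, e.card = r ∧ Δ e = c

open Pointwise

section TraceColouring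

variable {V : Type*} [Fintype V] [DecidableEq V]

def trace (ι : V ↪ ℕ) (e : Finset ℕ) : Finset V := {v | ι v ∈ e}

omit [DecidableEq V] in
lemma mem_trace {ι : V ↪ ℕ} {e : Finset ℕ} {v : V} : v ∈ trace ι e ↔ ι v ∈ e := by
  simp [trace]

/-- `∅` serves as the extra colour: it is never a member of `𝒜`. -/
def traceColouring (ι : V ↪ ℕ) (𝒜 : Finset (Finset V)) (e : Finset ℕ) : Finset V :=
  if trace ι e ∈ 𝒜 then trace ι e else ∅

omit [DecidableEq V] in
lemma exists_trace_eq (ι : V ↪ ℕ) {X : Set ℕ} (hX : X.Infinite) {S : Finset V}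
    (hSX : ∀ v ∈ S, ι v ∈ X) {r : ℕ} (hSr : #S ≤ r) :
    ∃ e : Finset ℕ, ↑e ⊆ X ∧ #e = r ∧ trace ι e = S := by
  obtain ⟨t, htX, htcard⟩ := (hX.sdiff (Set.finite_range ι)).exists_subset_card_eq (r - #S)
  have hnt : ∀ v, ι v ∉ t := fun v hv => (htX hv).2 ⟨v, rfl⟩
  refine ⟨S.map ι ∪ t, ?_, ?_, ?_⟩
  · rw [coe_union, coe_map, Set.union_subset_iff, Set.image_subset_iff]
    exact ⟨hSX, fun x hx => (htX hx).1⟩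
  · have hdisj : Disjoint (S.map ι) t := disjoint_left.mpr fun x hx hxt => by
      obtain ⟨v, -, rfl⟩ := mem_map.mp hx
      exact hnt v hxt
    rw [card_union_of_disjoint hdisj, card_map, htcard]
    omega
  · ext v
    simp [mem_trace, hnt]

open Classical in
lemma coloursOn_traceColouring (ι : V ↪ ℕ) {𝒜 : Finset (Finset V)} {r : ℕ}
    (hr : ∀ S ∈ 𝒜, #S ≤ r) {X : Set ℕ} (hX : X.Infinite) :
    coloursOn r (traceColouring ι 𝒜) X = ↑(insert ∅ {S ∈ 𝒜 | ∀ v ∈ S, ι v ∈ X}) := by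
  ext S
  simp only [coloursOn, Set.mem_image, Set.mem_ofPred_eq, coe_insert, Set.mem_insert_iff,
    mem_coe, mem_filter]
  constructor
  · rintro ⟨e, ⟨heX, -⟩, rfl⟩
    unfold traceColouring
    split_ifs with h
    · exact Or.inr ⟨h, fun v hv => heX (mem_trace.mp hv)⟩
    · exact Or.inl rfl
  · rintro (rfl | ⟨hS, hSX⟩)
    · obtain ⟨e, heX, hecard, he⟩ := exists_trace_eq ι hX (S := ∅) (by simp) (Nat.zero_le r)
      exact ⟨e, ⟨heX, hecard⟩, by simp [traceColouring, he]⟩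
    · obtain ⟨e, heX, hecard, he⟩ := exists_trace_eq ι hX hSX (hr S hS)
      exact ⟨e, ⟨heX, hecard⟩, by simp [traceColouring, he, hS]⟩

open Classical in
lemma gamma_traceColouring (ι : V ↪ ℕ) {𝒜 : Finset (Finset V)} {r : ℕ} (hempty : ∅ ∉ 𝒜)
    (hr : ∀ S ∈ 𝒜, #S ≤ r) {X : Set ℕ} (hX : X.Infinite) :
    gamma r (traceColouring ι 𝒜) X = #{S ∈ 𝒜 | ∀ v ∈ S, ι v ∈ X} + 1 := by
  rw [gamma, coloursOn_traceColouring ι hr hX, Set.ncard_coe_finset,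
    card_insert_of_notMem fun h => hempty (mem_filter.mp h).1]

end TraceColouring

lemma exists_isColouring_gamma_eq {α : Type*} {Δ : Finset ℕ → α} {r : ℕ} {D : Finset α}
    (hD : coloursOn r Δ Set.univ = D) :
    ∃ Δ' : Finset ℕ → ℕ, IsColouring r #D Δ' ∧ ∀ X, gamma r Δ' X = gamma r Δ X := by
  classical
  let f : α → ℕ := fun a => if h : a ∈ D then D.equivFin ⟨a, h⟩ + 1 else 0
  have hf : ∀ a (h : a ∈ D), f a = D.equivFin ⟨a, h⟩ + 1 := fun a h => dif_pos h
  have hΔ : ∀ e : Finset ℕ, #e = r → Δ e ∈ D := fun e he => by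
    rw [← mem_coe, ← hD]
    exact ⟨e, ⟨Set.subset_univ _, he⟩, rfl⟩
  refine ⟨f ∘ Δ, ⟨fun e he => ?_, fun c hc => ?_⟩, fun X => ?_⟩
  · rw [Function.comp_apply, hf _ (hΔ e he), mem_Icc]
    exact ⟨Nat.le_add_left _ _, (D.equivFin _).isLt⟩
  · rw [mem_Icc] at hc
    set a := D.equivFin.symm ⟨c - 1, by omega⟩
    obtain ⟨e, ⟨-, he⟩, hea⟩ : (a : α) ∈ coloursOn r Δ Set.univ := by rw [hD]; exact a.2
    refine ⟨e, he, ?_⟩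
    rw [Function.comp_apply, hea, hf _ a.2]
    simp only [Subtype.coe_eta, Equiv.apply_symm_apply, a]
    omega
  · have hinj : Set.InjOn f (coloursOn r Δ X) := by
      rintro _ ⟨e, ⟨-, he⟩, rfl⟩ _ ⟨e', ⟨-, he'⟩, rfl⟩ hee'
      rw [hf _ (hΔ e he), hf _ (hΔ e' he')] at hee'
      exact congrArg Subtype.val
        (D.equivFin.injective (a₁ := ⟨_, hΔ e he⟩) (a₂ := ⟨_, hΔ e' he'⟩) (Fin.ext (by omega)))
    rw [gamma, gamma, coloursOn, Set.image_comp, ← coloursOn, hinj.ncard_image]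

theorem exists_colouring_of_card_lt_add_card_filter_mem {V : Type*} [Fintype V] [DecidableEq V]
    {𝒜 : Finset (Finset V)} {r b : ℕ} (hempty : ∅ ∉ 𝒜) (hr : ∀ S ∈ 𝒜, #S ≤ r)
    (hdeg : ∀ v, #𝒜 < b + #{S ∈ 𝒜 | v ∈ S}) :
    ∃ Δ : Finset ℕ → ℕ, IsColouring r (#𝒜 + 1) Δ ∧ ∀ m ∈ Fdelta r Δ, m = #𝒜 + 1 ∨ m ≤ b := by
  classical
  let ι : V ↪ ℕ := (Fintype.equivFin V).toEmbedding.trans Fin.valEmbedding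
  obtain ⟨Δ, hΔ, hγ⟩ := exists_isColouring_gamma_eq
    (coloursOn_traceColouring ι hr Set.infinite_univ)
  simp only [Set.mem_univ, implies_true, filter_true] at hΔ
  rw [card_insert_of_notMem hempty] at hΔ
  refine ⟨Δ, hΔ, ?_⟩
  rintro _ ⟨X, hX, rfl⟩
  rw [hγ, gamma_traceColouring ι hempty hr hX]
  by_cases hall : ∀ v, ι v ∈ X
  · left
    rw [filter_true_of_mem fun S _ v _ => hall v]
  · right
    push Not at hall
    obtain ⟨v, hv⟩ := hall
    have hsub : {S ∈ 𝒜 | ∀ v ∈ S, ι v ∈ X} ⊆ {S ∈ 𝒜 | v ∉ S} := fun S hS =>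
      mem_filter.mpr ⟨(mem_filter.mp hS).1, fun hvS => hv ((mem_filter.mp hS).2 v hvS)⟩
    have := card_le_card hsub
    have := card_filter_add_card_filter_not (s := 𝒜) (fun S => v ∈ S)
    have := hdeg v
    omega

namespace Nat

lemma sum_range_add_two_choose (n j : ℕ) :
    ∑ i ∈ range (j + 2), n.choose i = (n + 1).choose (j + 1) + ∑ i ∈ range j, n.choose i := by
  rw [sum_range_succ, sum_range_succ, choose_succ_succ']
  ring

lemma sum_range_choose_succ (n r : ℕ) :
    ∑ i ∈ range (r + 1), (n + 1).choose i =
      ∑ i ∈ range (r + 1), n.choose i + ∑ i ∈ range r, n.choose i := by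
  rw [sum_range_succ', sum_range_succ' (fun i => n.choose i)]
  simp only [choose_succ_succ', sum_add_distrib, choose_zero_right]
  ring

/-- Below `n / 3` the binomial coefficients at least double at each step. -/
lemma sum_range_choose_le_choose {n t : ℕ} (h : 3 * t ≤ n + 1) :
    ∑ i ∈ range t, n.choose i ≤ n.choose t := by
  induction t with
  | zero => simp
  | succ t ih =>
    have hdouble : 2 * n.choose t ≤ n.choose (t + 1) := by
      refine Nat.le_of_mul_le_mul_right ?_ (succ_pos t)
      rw [choose_succ_right_eq]
      calc 2 * n.choose t * (t + 1) = n.choose t * (2 * (t + 1)) := by ring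
        _ ≤ n.choose t * (n - t) := Nat.mul_le_mul_left _ (by omega)
    rw [sum_range_succ]
    have := ih (by omega)
    omega

lemma mul_lt_choose_add {n j : ℕ} (hj : 2 ≤ j) (hn : 3 * j + 6 ≤ n) :
    (j + 1) * n < n.choose j + j := by
  have hchoose2 : n.choose 2 ≤ n.choose j := by
    rcases hj.eq_or_lt with rfl | hj
    · rfl
    · exact (single_le_sum (fun _ _ => Nat.zero_le _) (mem_range.mpr hj)).trans
        (sum_range_choose_le_choose (by omega))
  have h2 : n.choose 2 * 2 = n * (n - 1) := by
    simpa using choose_succ_right_eq n 1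
  obtain ⟨m, rfl⟩ : ∃ m, n = m + 1 := ⟨n - 1, by omega⟩
  simp only [Nat.add_sub_cancel] at h2
  nlinarith

/-- Weigh `(m + 1) C(m, i) = (i + 1) C(m + 1, i + 1)` by `i + 1 ≤ j`. -/
lemma mul_sum_range_choose_add_le (m j : ℕ) :
    (m + 2) * ∑ i ∈ range j, m.choose i + j + (m + 1).choose j ≤
      (j + 1) * ∑ i ∈ range (j + 1), (m + 1).choose i := by
  have hweighted : (m + 1) * ∑ i ∈ range j, m.choose i ≤
      j * ∑ i ∈ range j, (m + 1).choose (i + 1) := by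
    rw [mul_sum, mul_sum]
    refine sum_le_sum fun i hi => ?_
    rw [add_one_mul_choose_eq, mul_comm]
    exact Nat.mul_le_mul_right _ (mem_range.mp hi)
  have hle : ∑ i ∈ range j, m.choose i ≤ ∑ i ∈ range j, (m + 1).choose i :=
    sum_le_sum fun i _ => choose_le_choose i (le_succ m)
  have hshift := sum_range_succ' (fun i => (m + 1).choose i) j
  have hsplit := sum_range_succ (fun i => (m + 1).choose i) j
  simp only [choose_zero_right] at hshift
  rw [hshift]
  linarith

end Nat

section TranslationInvariant

variable {G : Type*} [AddGroup G] [DecidableEq G]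

def IsTranslationInvariant (𝒜 : Finset (Finset G)) : Prop :=
  ∀ g : G, ∀ S ∈ 𝒜, g +ᵥ S ∈ 𝒜

lemma IsTranslationInvariant.sdiff {𝒜 ℬ : Finset (Finset G)} (h𝒜 : IsTranslationInvariant 𝒜)
    (hℬ : IsTranslationInvariant ℬ) : IsTranslationInvariant (𝒜 \ ℬ) := by
  intro g S hS
  rw [mem_sdiff] at hS ⊢
  refine ⟨h𝒜 g S hS.1, fun hgS => hS.2 ?_⟩
  simpa using hℬ (-g) _ hgS

lemma IsTranslationInvariant.card_filter_mem_le {𝒜 : Finset (Finset G)}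
    (h𝒜 : IsTranslationInvariant 𝒜) (a b : G) :
    #{S ∈ 𝒜 | a ∈ S} ≤ #{S ∈ 𝒜 | b ∈ S} := by
  refine card_le_card_of_injOn (fun S => (b - a) +ᵥ S) (fun S hS => ?_)
    (fun S _ T _ h => (vadd_left_cancel_iff (b - a)).mp h)
  rw [mem_coe, mem_filter] at hS ⊢
  refine ⟨h𝒜 _ S hS.1, ?_⟩
  simpa using (vadd_mem_vadd_finset_iff (b - a)).mpr hS.2

lemma IsTranslationInvariant.card_mul_card_filter_mem [Fintype G] {𝒜 : Finset (Finset G)}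
    {k : ℕ} (h𝒜 : IsTranslationInvariant 𝒜) (hk : ∀ S ∈ 𝒜, #S = k) (a : G) :
    Fintype.card G * #{S ∈ 𝒜 | a ∈ S} = k * #𝒜 := by
  rw [← sum_card fun b => (h𝒜.card_filter_mem_le b a).antisymm (h𝒜.card_filter_mem_le a b),
    sum_congr rfl hk, sum_const, smul_eq_mul, mul_comm]

lemma isTranslationInvariant_powersetCard [Fintype G] (k : ℕ) :
    IsTranslationInvariant (powersetCard k (univ : Finset G)) := by
  intro g S hS
  rw [mem_powersetCard_univ] at hS ⊢
  rw [card_vadd_finset, hS]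

def translates [Fintype G] (S : Finset G) : Finset (Finset G) :=
  univ.image fun g : G => g +ᵥ S

lemma isTranslationInvariant_translates [Fintype G] (S : Finset G) :
    IsTranslationInvariant (translates S) := by
  intro g T hT
  obtain ⟨x, -, rfl⟩ := mem_image.mp hT
  exact mem_image.mpr ⟨g + x, mem_univ _, (vadd_vadd g x S).symm⟩

lemma self_mem_translates [Fintype G] (S : Finset G) : S ∈ translates S :=
  mem_image.mpr ⟨0, mem_univ _, zero_vadd G S⟩

lemma IsTranslationInvariant.translates_subset [Fintype G] {𝒜 : Finset (Finset G)}
    (h𝒜 : IsTranslationInvariant 𝒜) {S : Finset G} (hS : S ∈ 𝒜) : translates S ⊆ 𝒜 := by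
  intro T hT
  obtain ⟨x, -, rfl⟩ := mem_image.mp hT
  exact h𝒜 x S hS

/-- Peel off whole orbits, each of which covers every point equally often, until fewer than
`|G|` sets remain to be chosen. -/
theorem IsTranslationInvariant.exists_balanced_subfamily [Fintype G] {𝒜 : Finset (Finset G)}
    {k : ℕ} (h𝒜 : IsTranslationInvariant 𝒜) (hk : ∀ S ∈ 𝒜, #S = k) {m : ℕ} (hm : m ≤ #𝒜) :
    ∃ ℬ ⊆ 𝒜, #ℬ = m ∧ ∀ a : G,
      k * m ≤ Fintype.card G * #{S ∈ ℬ | a ∈ S} + k * (Fintype.card G - 1) := by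
  induction 𝒜 using Finset.strongInduction generalizing m with
  | H 𝒜 ih =>
  by_cases hmG : m < Fintype.card G
  · obtain ⟨ℬ, hℬ, hcard⟩ := exists_subset_card_eq hm
    exact ⟨ℬ, hℬ, hcard, fun a => le_add_left (Nat.mul_le_mul_left k (by omega))⟩
  obtain ⟨S, hS⟩ : 𝒜.Nonempty := card_pos.mp (by have := Fintype.card_pos (α := G); omega)
  have h𝒪 : translates S ⊆ 𝒜 := h𝒜.translates_subset hS
  have h𝒪card : #(translates S) ≤ Fintype.card G := card_image_le
  obtain ⟨ℬ, hℬ, hℬcard, hℬdeg⟩ :=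
    ih _ (sdiff_ssubset h𝒪 ⟨S, self_mem_translates S⟩)
      (h𝒜.sdiff (isTranslationInvariant_translates S))
      (fun T hT => hk T (mem_sdiff.mp hT).1) (m := m - #(translates S))
      (by rw [card_sdiff_of_subset h𝒪]; omega)
  have hdisj : Disjoint ℬ (translates S) := disjoint_of_subset_left hℬ sdiff_disjoint
  refine ⟨ℬ ∪ translates S, union_subset (hℬ.trans sdiff_subset) h𝒪, ?_, fun a => ?_⟩
  · rw [card_union_of_disjoint hdisj]
    omega
  · have h𝒪deg := (isTranslationInvariant_translates S).card_mul_card_filter_mem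
      (fun T hT => hk T (h𝒪 hT)) a
    rw [filter_union, card_union_of_disjoint (disjoint_filter_filter hdisj), mul_add]
    have := hℬdeg a
    have : k * m = k * (m - #(translates S)) + k * #(translates S) := by
      rw [← mul_add]; congr 1; omega
    omega

end TranslationInvariant

lemma ZMod.natCast_ne_zero_of_lt {n k : ℕ} (hk : 0 < k) (hkn : k < n) : (k : ZMod n) ≠ 0 :=
  fun h => absurd (Nat.le_of_dvd hk ((ZMod.natCast_eq_zero_iff k n).mp h)) (by omega)

lemma card_translates_zero_one {n : ℕ} (hn : 2 ≤ n) :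
    #(translates ({0, 1} : Finset (ZMod (n + 1)))) = n + 1 := by
  have h1 : (1 : ZMod (n + 1)) ≠ 0 := by
    exact_mod_cast ZMod.natCast_ne_zero_of_lt one_pos (by omega)
  have h2 : (2 : ZMod (n + 1)) ≠ 0 := by
    exact_mod_cast ZMod.natCast_ne_zero_of_lt two_pos (by omega)
  rw [translates, card_image_of_injective _ fun g h hgh => ?_, card_univ, ZMod.card]
  simp only [vadd_finset_insert, vadd_finset_singleton, vadd_eq_add, add_zero] at hgh
  have hg : g ∈ ({h, h + 1} : Finset _) := hgh ▸ mem_insert_self g _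
  have hh : h ∈ ({g, g + 1} : Finset _) := hgh.symm ▸ mem_insert_self h _
  simp only [mem_insert, mem_singleton] at hg hh
  rcases hg with hg | rfl
  · exact hg
  · rcases hh with hh | hh
    · exact absurd (by simpa using hh.symm) h1
    · exact absurd (by rw [add_assoc, one_add_one_eq_two] at hh; simpa using hh.symm) h2

lemma exists_family_card_sub_one {r n : ℕ} (hr : 3 ≤ r) (hn : 3 * r ≤ n) :
    ∃ ℰ : Finset (Finset (ZMod (n + 1))), (∀ S ∈ ℰ, #S = r - 1) ∧
      #ℰ = ∑ i ∈ range (r - 1), n.choose i ∧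
      ∀ v, ∑ i ∈ range (r - 2), (n - 1).choose i < #{S ∈ ℰ | v ∈ S} := by
  obtain ⟨m, rfl⟩ : ∃ m, n = m + 1 := ⟨n - 1, by omega⟩
  have hcardG : Fintype.card (ZMod (m + 1 + 1)) = m + 2 := ZMod.card _
  rcases hr.eq_or_lt with rfl | hr
  · have hsize : ∀ S ∈ translates ({0, 1} : Finset (ZMod (m + 1 + 1))), #S = 2 := by
      intro S hS
      obtain ⟨g, -, rfl⟩ := mem_image.mp hS
      rw [card_vadd_finset, card_pair]
      exact_mod_cast (ZMod.natCast_ne_zero_of_lt one_pos (by omega)).symm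
    refine ⟨translates {0, 1}, hsize, ?_, fun v => ?_⟩
    · rw [card_translates_zero_one (by omega)]
      simp only [Nat.add_one_sub_one, sum_range_succ, range_one, sum_singleton,
        Nat.choose_zero_right, Nat.choose_one_right]
      ring
    · have := (isTranslationInvariant_translates _).card_mul_card_filter_mem hsize v
      rw [card_translates_zero_one (by omega), hcardG] at this
      simp only [Nat.reduceSub, range_one, sum_singleton, Nat.choose_zero_right]
      nlinarith
  obtain ⟨j, rfl⟩ : ∃ j, r = j + 2 := ⟨r - 2, by omega⟩
  simp only [Nat.add_sub_cancel, show j + 2 - 1 = j + 1 by omega] at *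
  have hm : ∑ i ∈ range (j + 1), (m + 1).choose i ≤
      #(powersetCard (j + 1) (univ : Finset (ZMod (m + 1 + 1)))) := by
    rw [card_powersetCard, card_univ, hcardG]
    exact (Nat.sum_range_choose_le_choose (by omega)).trans (Nat.choose_le_choose _ (by omega))
  obtain ⟨ℰ, hℰ, hcard, hdeg⟩ :=
    (isTranslationInvariant_powersetCard (j + 1)).exists_balanced_subfamily
      (fun S hS => mem_powersetCard_univ.mp hS) hm
  refine ⟨ℰ, fun S hS => mem_powersetCard_univ.mp (hℰ hS), hcard, fun v => ?_⟩
  -- a degree this small would force `C(n, j) + j ≤ (j + 1) n`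
  by_contra! hle
  have := hdeg v
  rw [hcardG, show m + 2 - 1 = m + 1 by omega] at this
  have := Nat.mul_le_mul_left (m + 2) hle
  have := Nat.mul_sum_range_choose_add_le m j
  have := Nat.mul_lt_choose_add (n := m + 1) (j := j) (by omega) (by omega)
  omega

lemma exists_cover_family {r n : ℕ} (hr : 3 ≤ r) (hn : 3 * r ≤ n) :
    ∃ 𝒜 : Finset (Finset (ZMod (n + 1))), ∅ ∉ 𝒜 ∧ (∀ S ∈ 𝒜, #S ≤ r) ∧
      #𝒜 = ∑ i ∈ range (r + 1), n.choose i ∧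
      ∀ v, #𝒜 < ∑ i ∈ range (r + 1), (n - 1).choose i + #{S ∈ 𝒜 | v ∈ S} := by
  obtain ⟨ℰ, hℰ, hℰcard, hℰdeg⟩ := exists_family_card_sub_one hr hn
  have hcardG : Fintype.card (ZMod (n + 1)) = n + 1 := ZMod.card _
  have hdisj : Disjoint (powersetCard r univ) ℰ := disjoint_left.mpr fun S h1 h2 => by
    have := mem_powersetCard_univ.mp h1
    have := hℰ S h2
    omega
  have hcard : #(powersetCard r univ ∪ ℰ) = ∑ i ∈ range (r + 1), n.choose i := by
    rw [card_union_of_disjoint hdisj, card_powersetCard, card_univ, hcardG, hℰcard]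
    obtain ⟨j, rfl⟩ : ∃ j, r = j + 1 := ⟨r - 1, by omega⟩
    rw [Nat.sum_range_add_two_choose]
    simp
  have hdeg_r : ∀ v, #{S ∈ powersetCard r (univ : Finset (ZMod (n + 1))) | v ∈ S} =
      n.choose (r - 1) := fun v => by
    have := (isTranslationInvariant_powersetCard r).card_mul_card_filter_mem
      (fun S hS => mem_powersetCard_univ.mp hS) v
    rw [hcardG, card_powersetCard, card_univ, hcardG] at this
    have h2 := Nat.add_one_mul_choose_eq n (r - 1)
    rw [Nat.sub_add_cancel (by omega)] at h2
    exact Nat.eq_of_mul_eq_mul_left (Nat.succ_pos n) (by rw [this, h2, mul_comm])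
  refine ⟨powersetCard r univ ∪ ℰ, fun h => ?_, fun S hS => ?_, hcard, fun v => ?_⟩
  · rcases mem_union.mp h with h | h
    · have := mem_powersetCard_univ.mp h
      rw [card_empty] at this
      omega
    · have := hℰ _ h
      rw [card_empty] at this
      omega
  · rcases mem_union.mp hS with h | h
    · exact (mem_powersetCard_univ.mp h).le
    · have := hℰ _ h
      omega
  · rw [hcard, filter_union, card_union_of_disjoint (disjoint_filter_filter hdisj), hdeg_r]
    have := hℰdeg v
    obtain ⟨m, rfl⟩ : ∃ m, n = m + 1 := ⟨n - 1, by omega⟩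
    obtain ⟨j, rfl⟩ : ∃ j, r = j + 2 := ⟨r - 2, by omega⟩
    simp only [Nat.add_sub_cancel, show j + 2 - 1 = j + 1 by omega] at this ⊢
    rw [Nat.sum_range_choose_succ m (j + 2), Nat.sum_range_add_two_choose m j]
    omega

/-- **Theorem 4, explicit form.** For every `r ≥ 3` there is `N` such that for every `n ≥ N`
with `(r-1) ∣ (n+1)` there is a surjective colouring `Δ : ℕ^(r) ↠ [k]` with
`k = Σ_{i=0}^{r} C(n,i) + 1` such that every `m' ∈ F_Δ` with `m' < k` satisfies
`m' ≤ Σ_{i=0}^{r} C(n-1,i)`; in particular `F_Δ` avoids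
`(Σ_{i=0}^{r} C(n-1,i), Σ_{i=0}^{r} C(n,i)]`. -/
theorem Fdelta_avoids_J_explicit (r : ℕ) (hr : 3 ≤ r) :
    ∃ N : ℕ, ∀ n : ℕ, N ≤ n → (r - 1) ∣ (n + 1) →
      ∃ Δ : Finset ℕ → ℕ,
        IsColouring r ((∑ i ∈ Finset.range (r + 1), Nat.choose n i) + 1) Δ ∧
        (∀ m' ∈ Fdelta r Δ,
          m' < (∑ i ∈ Finset.range (r + 1), Nat.choose n i) + 1 →
            m' ≤ ∑ i ∈ Finset.range (r + 1), Nat.choose (n - 1) i) ∧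
        ∀ m' ∈ Fdelta r Δ,
          ¬((∑ i ∈ Finset.range (r + 1), Nat.choose (n - 1) i) < m' ∧
            m' ≤ ∑ i ∈ Finset.range (r + 1), Nat.choose n i) := by
  refine ⟨3 * r, fun n hn _ => ?_⟩
  obtain ⟨𝒜, hempty, hsize, hcard, hdeg⟩ := exists_cover_family hr hn
  obtain ⟨Δ, hΔ, hF⟩ := exists_colouring_of_card_lt_add_card_filter_mem hempty hsize hdeg
  rw [hcard] at hΔ hF
  refine ⟨Δ, hΔ, fun m hm hlt => ?_, fun m hm => ?_⟩ <;> rcases hF m hm with rfl | h <;> omega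
end

section
/- For every integer r ≥ 2 there exists a constant C_r such that for every natural number k ≥ 1 and every surjective colouring Δ: ℕ^(r) ↠ [k], one has |F_Δ| ≥ (r!·k)^{1/r} - C_r. -/
open Finset

/-!
Let `m = |F_Δ|`. Iterating the infinite Ramsey theorem yields a colouring `φ` of all sets of size
at most `r` that extends `Δ` and is canonical in the following sense: for every finite `B` there is
an infinite `Y` above `B` such that the colours of `Δ` on `B ∪ Y` are exactly the `φ`-colours of
the subsets of `B`, so their number lies in `F_Δ`. Represent every colour by its colex-least set
`D` of size at most `r`, and record for each `x ∈ D` the number of `φ`-colours seen on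
`[0, x] ∪ {w ∈ D | x < w}`. This is a multiset of at most `r` values from `F_Δ`, and colex
minimality makes it determine `D`. Hence `k ≤ (m + r).choose r ≤ (m + r) ^ r / r!`.
-/

theorem Finset.card_sym {α : Type*} [DecidableEq α] (s : Finset α) (n : ℕ) :
    #(s.sym n) = (#s).multichoose n := by
  have huniv : s.attach.sym n = univ :=
    eq_univ_of_forall fun m ↦ mem_sym_iff.2 fun a _ ↦ mem_attach s a
  have h := sym_map (n := n) (Function.Embedding.subtype (· ∈ s)) s.attach
  rw [attach_map_val] at h
  rw [h, card_map, huniv, card_univ, Sym.card_sym_eq_multichoose, Fintype.card_coe]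

lemma exists_antitone_seq {W : Set ℕ} (hW : W.Infinite) {P : ℕ → Set ℕ → Set ℕ → Prop}
    (step : ∀ n A, A ⊆ W → A.Infinite → ∃ B ⊆ A, B.Infinite ∧ P n A B) :
    ∃ Z : ℕ → Set ℕ, Z 0 = W ∧ Antitone Z ∧ (∀ n, (Z n).Infinite) ∧
      ∀ n, P n (Z n) (Z (n + 1)) := by
  let Good := {A : Set ℕ // A ⊆ W ∧ A.Infinite}
  have step' : ∀ n (A : Good), ∃ B : Good, B.1 ⊆ A.1 ∧ P n A.1 B.1 := fun n A ↦
    let ⟨B, hBA, hB, hP⟩ := step n A.1 A.2.1 A.2.2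
    ⟨⟨B, hBA.trans A.2.1, hB⟩, hBA, hP⟩
  choose next hnext using step'
  let Z : ℕ → Good := fun n ↦ Nat.rec ⟨W, subset_rfl, hW⟩ next n
  exact ⟨fun n ↦ (Z n).1, rfl, antitone_nat_of_succ_le fun n ↦ (hnext n (Z n)).1,
    fun n ↦ (Z n).2.2, fun n ↦ (hnext n (Z n)).2⟩

section Ramsey

variable {α : Type*} {C : Set α}

lemma exists_infinite_setOf_eq (hC : C.Finite) {f : ℕ → α}
    (hf : ∀ n, f n ∈ C) : ∃ c ∈ C, {n | f n = c}.Infinite := by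
  have := hC.to_subtype
  obtain ⟨⟨c, hc⟩, hfib⟩ := Finite.exists_infinite_fiber fun n ↦ (⟨f n, hf n⟩ : C)
  refine ⟨c, hc, ?_⟩
  convert Set.infinite_coe_iff.1 hfib using 1
  ext n
  simp [Subtype.ext_iff]

theorem exists_infinite_homogeneous (hC : C.Finite) (s : ℕ)
    (f : Finset ℕ → α) {W : Set ℕ} (hW : W.Infinite)
    (hf : ∀ T : Finset ℕ, ↑T ⊆ W → #T = s → f T ∈ C) :
    ∃ W' ⊆ W, W'.Infinite ∧ ∃ c ∈ C, ∀ T : Finset ℕ, ↑T ⊆ W' → #T = s → f T = c := by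
  induction s generalizing f W with
  | zero =>
    exact ⟨W, subset_rfl, hW, f ∅, hf ∅ (by simp) rfl, fun T _ hT ↦ by rw [card_eq_zero.1 hT]⟩
  | succ s ih =>
    -- choose `z₀ < z₁ < ⋯` such that the colour of `insert zₙ T` depends only on `n` for `T`
    -- above `zₙ`, then keep the `zₙ` whose colour is one that occurs infinitely often
    obtain ⟨Z, hZ0, hanti, hinf, hstep⟩ := exists_antitone_seq hW
      (P := fun _ A B ↦ ∃ z ∈ A, (∀ b ∈ B, z < b) ∧
        ∃ c ∈ C, ∀ T : Finset ℕ, ↑T ⊆ B → #T = s → f (insert z T) = c) fun _ A hAW hA ↦ by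
      obtain ⟨z, hz⟩ := hA.nonempty
      have hA' : (A \ Set.Iic z).Infinite := hA.sdiff (Set.finite_Iic z)
      obtain ⟨B, hBA, hB, c, hc, hfc⟩ := ih (fun T ↦ f (insert z T)) hA' fun T hT hTs ↦ by
        have hzT : z ∉ T := fun h ↦ (hT h).2 (Set.mem_Iic.2 le_rfl)
        refine hf _ ?_ (by rw [card_insert_of_notMem hzT, hTs])
        rw [coe_insert]
        exact Set.insert_subset (hAW hz) (hT.trans (Set.sdiff_subset.trans hAW))
      exact ⟨B, hBA.trans Set.sdiff_subset, hB, z, hz, fun b hb ↦ not_le.1 (hBA hb).2, c, hc, hfc⟩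
    choose z hzZ hz_lt col hcol hcol_eq using hstep
    have hz_mono : StrictMono z := strictMono_nat_of_lt_succ fun n ↦ hz_lt n _ (hzZ (n + 1))
    obtain ⟨c, hc, hfib⟩ := exists_infinite_setOf_eq hC hcol
    refine ⟨z '' {n | col n = c}, ?_, ?_, c, hc, fun T hT hTs ↦ ?_⟩
    · rintro _ ⟨n, -, rfl⟩
      exact hZ0 ▸ hanti (Nat.zero_le n) (hzZ n)
    · exact hfib.image hz_mono.injective.injOn
    · have hne : T.Nonempty := card_pos.1 (by omega)
      obtain ⟨n₀, hn₀, hzn₀⟩ := hT (T.min'_mem hne)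
      have hrest : ↑(T.erase (z n₀)) ⊆ Z (n₀ + 1) := by
        intro y hy
        obtain ⟨hy_ne, hyT⟩ := mem_erase.1 hy
        obtain ⟨m, -, rfl⟩ := hT hyT
        have : n₀ < m := hz_mono.lt_iff_lt.1 ((hzn₀ ▸ T.min'_le _ hyT).lt_of_ne (Ne.symm hy_ne))
        exact hanti this (hzZ m)
      have hmem : z n₀ ∈ T := hzn₀ ▸ T.min'_mem hne
      calc f T = f (insert (z n₀) (T.erase (z n₀))) := by rw [insert_erase hmem]
        _ = c := (hcol_eq n₀ _ hrest (by rw [card_erase_of_mem hmem, hTs]; rfl)).trans hn₀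

theorem exists_infinite_homogeneous_finset {ι : Type*} (hC : C.Finite)
    (𝒮 : Finset ι) (s : ι → ℕ) (f : ι → Finset ℕ → α) {W : Set ℕ} (hW : W.Infinite)
    (hf : ∀ i ∈ 𝒮, ∀ T : Finset ℕ, ↑T ⊆ W → #T = s i → f i T ∈ C) :
    ∃ W' ⊆ W, W'.Infinite ∧ ∀ i ∈ 𝒮, ∃ c, ∀ T : Finset ℕ, ↑T ⊆ W' → #T = s i → f i T = c := by
  classical
  induction 𝒮 using Finset.induction_on generalizing W with
  | empty => exact ⟨W, subset_rfl, hW, by simp⟩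
  | insert i 𝒮 _ ih =>
    obtain ⟨W₁, hW₁, hW₁inf, c, -, hc⟩ :=
      exists_infinite_homogeneous hC (s i) (f i) hW (hf i (mem_insert_self i 𝒮))
    obtain ⟨W₂, hW₂, hW₂inf, h𝒮⟩ :=
      ih hW₁inf fun j hj T hT ↦ hf j (mem_insert_of_mem hj) T (hT.trans hW₁)
    exact ⟨W₂, hW₂.trans hW₁, hW₂inf,
      (forall_mem_insert _ _ _).2 ⟨⟨c, fun T hT ↦ hc T (hT.trans hW₂)⟩, h𝒮⟩⟩

end Ramsey

section Canonical

variable {α : Type*}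

def colourSet [DecidableEq α] (φ : Finset ℕ → α) (r : ℕ) (B : Finset ℕ) : Finset α :=
  {S ∈ B.powerset | #S ≤ r}.image φ

variable {C : Set α} {Δ : Finset ℕ → α} {r : ℕ}

lemma exists_infinite_homogeneous_above (hC : C.Finite) (hΔ : ∀ e : Finset ℕ, #e = r → Δ e ∈ C)
    (n : ℕ) {A : Set ℕ} (hA : A.Infinite) :
    ∃ B ⊆ A, B.Infinite ∧ (∀ x ∈ B, n < x) ∧ ∀ S ⊆ range (n + 1), #S ≤ r →
      ∃ c, ∀ T : Finset ℕ, ↑T ⊆ B → #T = r - #S → Δ (S ∪ T) = c := by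
  classical
  obtain ⟨B, hBA, hB, hhom⟩ := exists_infinite_homogeneous_finset hC
    {S ∈ (range (n + 1)).powerset | #S ≤ r} (fun S ↦ r - #S) (fun S T ↦ Δ (S ∪ T))
    (hA.sdiff (Set.finite_Iic n)) fun S hS T hT hTS ↦ by
      rw [mem_filter, mem_powerset] at hS
      refine hΔ _ ?_
      rw [card_union_of_disjoint (disjoint_left.2 fun x hxS hxT ↦ (hT hxT).2 ?_), hTS]
      · omega
      · simpa [Nat.lt_succ_iff] using hS.1 hxS
  exact ⟨B, hBA.trans Set.sdiff_subset, hB, fun x hx ↦ not_le.1 (hBA hx).2,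
    fun S hS hSr ↦ hhom S (mem_filter.2 ⟨mem_powerset.2 hS, hSr⟩)⟩

lemma coloursOn_union_eq [DecidableEq α] {φ : Finset ℕ → α} {B : Finset ℕ} {Y : Set ℕ}
    (hY : Y.Infinite) (hBY : ∀ b ∈ B, ∀ y ∈ Y, b < y)
    (hφ : ∀ S ⊆ B, #S ≤ r → ∀ T : Finset ℕ, ↑T ⊆ Y → #T = r - #S → Δ (S ∪ T) = φ S) :
    coloursOn r Δ (↑B ∪ Y) = colourSet φ r B := by
  ext c
  simp only [coloursOn, colourSet, coe_image, coe_filter, mem_powerset, Set.mem_image,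
    Set.mem_ofPred_eq]
  constructor
  · rintro ⟨e, ⟨he, her⟩, rfl⟩
    have hSB : {x ∈ e | x ∈ B} ⊆ B := fun x hx ↦ (mem_filter.1 hx).2
    have hTY : ↑{x ∈ e | x ∉ B} ⊆ Y := fun x hx ↦
      (he (mem_filter.1 hx).1).resolve_left (mem_filter.1 hx).2
    have hcard := card_filter_add_card_filter_not (s := e) (p := (· ∈ B))
    refine ⟨_, ⟨hSB, her ▸ card_filter_le _ _⟩, ?_⟩
    rw [← hφ _ hSB (her ▸ card_filter_le _ _) _ hTY (by omega), filter_union_filter_not_eq]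
  · rintro ⟨S, ⟨hSB, hSr⟩, rfl⟩
    obtain ⟨T, hTY, hT⟩ := hY.exists_subset_card_eq (r - #S)
    have hST : Disjoint S T := disjoint_left.2 fun x hxS hxT ↦ (hBY x (hSB hxS) x (hTY hxT)).false
    refine ⟨S ∪ T, ⟨?_, ?_⟩, hφ S hSB hSr T hTY hT⟩
    · rw [coe_union]
      exact Set.union_subset_union (by exact_mod_cast hSB) hTY
    · rw [card_union_of_disjoint hST]
      omega

theorem exists_canonical_colouring [DecidableEq α] (hC : C.Finite)
    (hΔ : ∀ e : Finset ℕ, #e = r → Δ e ∈ C) :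
    ∃ φ : Finset ℕ → α, (∀ S : Finset ℕ, #S = r → φ S = Δ S) ∧
      ∀ B : Finset ℕ, ∃ X : Set ℕ, X.Infinite ∧ coloursOn r Δ X = colourSet φ r B := by
  obtain ⟨Z, -, hanti, hinf, hZ⟩ := exists_antitone_seq Set.infinite_univ
    (P := fun n _ B ↦ (∀ x ∈ B, n < x) ∧ ∀ S ⊆ range (n + 1), #S ≤ r →
      ∃ c, ∀ T : Finset ℕ, ↑T ⊆ B → #T = r - #S → Δ (S ∪ T) = c)
    fun n _ _ hA ↦ exists_infinite_homogeneous_above hC hΔ n hA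
  -- `Z (n + 1)` lies above `n` and fixes the colour of `S ∪ T` for each `S ⊆ [0, n]`
  have hφ : ∀ S : Finset ℕ, ∃ c, #S ≤ r → ∀ n, S.sup id ≤ n →
      ∀ T : Finset ℕ, ↑T ⊆ Z (n + 1) → #T = r - #S → Δ (S ∪ T) = c := by
    intro S
    by_cases hSr : #S ≤ r
    · obtain ⟨c, hc⟩ := (hZ (S.sup id)).2 S (subset_range_sup_succ S) hSr
      exact ⟨c, fun _ n hn T hT ↦ hc T (hT.trans (hanti (by omega)))⟩
    · exact ⟨Δ S, fun h ↦ absurd h hSr⟩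
  choose φ hφ using hφ
  refine ⟨φ, fun S hS ↦ ?_, fun B ↦ ⟨↑B ∪ Z (B.sup id + 1), (hinf _).mono Set.subset_union_right,
    coloursOn_union_eq (hinf _) (fun b hb y hy ↦ (le_sup (f := id) hb).trans_lt ((hZ _).1 y hy))
      fun S hSB hSr T hT hTS ↦ hφ S hSr _ (sup_mono hSB) T hT hTS⟩⟩
  simpa using (hφ S hS.le (S.sup id) le_rfl ∅ (by simp) (by simp [hS])).symm

end Canonical

section Counting

variable {α : Type*} (φ : Finset ℕ → α) (r : ℕ)

def IsColexMinimal (D : Finset ℕ) : Prop :=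
  #D ≤ r ∧ ∀ E : Finset ℕ, #E ≤ r → φ E = φ D → toColex D ≤ toColex E

lemma exists_isColexMinimal {E : Finset ℕ} (hE : #E ≤ r) :
    ∃ D, φ D = φ E ∧ IsColexMinimal φ r D := by
  obtain ⟨D, ⟨hDr, hDE⟩, hmin⟩ := (InvImage.wf (fun s : Finset ℕ ↦ ∑ i ∈ s, 2 ^ i)
    wellFounded_lt).has_min {D | #D ≤ r ∧ φ D = φ E} ⟨E, hE, rfl⟩
  refine ⟨D, hDE, hDr, fun E' hE' hφ ↦ ?_⟩
  rw [← geomSum_le_geomSum_iff_toColex_le_toColex le_rfl]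
  exact not_lt.1 (hmin E' ⟨hE', hφ.trans hDE⟩)

variable [DecidableEq α]

lemma colourSet_mono : Monotone (colourSet φ r) := fun _ _ h ↦
  image_subset_image (filter_subset_filter _ (powerset_mono.2 h))

def profile (D : Finset ℕ) (x : ℕ) : ℕ := #(colourSet φ r (range (x + 1) ∪ {w ∈ D | x < w}))

variable {φ r}

lemma IsColexMinimal.card_colourSet_lt_profile {D : Finset ℕ} (hD : IsColexMinimal φ r D)
    {d : ℕ} (hd : d ∈ D) {B : Finset ℕ} (hB : B ⊆ range d ∪ {w ∈ D | d < w}) :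
    #(colourSet φ r B) < profile φ r D d := by
  set U := range (d + 1) ∪ {w ∈ D | d < w}
  have hBU : colourSet φ r B ⊆ colourSet φ r U :=
    colourSet_mono φ r (hB.trans (union_subset_union_left (range_subset_range.2 d.le_succ)))
  -- otherwise `φ D` is the colour of some `E ⊆ B`, which is colex-smaller than `D`
  refine (card_le_card hBU).lt_of_ne fun hcard ↦ ?_
  have hDU : φ D ∈ colourSet φ r U := by
    refine mem_image_of_mem φ (mem_filter.2 ⟨mem_powerset.2 fun w hw ↦ ?_, hD.1⟩)
    simp only [U, mem_union, mem_range, mem_filter]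
    by_cases hdw : d < w
    exacts [Or.inr ⟨hw, hdw⟩, Or.inl (by omega)]
  obtain ⟨E, hE, hED⟩ := mem_image.1 (eq_of_subset_of_card_le hBU hcard.ge ▸ hDU)
  rw [mem_filter, mem_powerset] at hE
  have hlt : toColex E < toColex D := by
    refine Colex.toColex_lt_toColex_iff_exists_forall_lt.2 ⟨d, hd, fun hdE ↦ ?_, fun b hbE hbD ↦ ?_⟩
    · simpa using hB (hE.1 hdE)
    · have := hB (hE.1 hbE)
      simp only [mem_union, mem_range, mem_filter] at this
      tauto
  exact (hD.2 E hE.2 hED).not_gt hlt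

lemma profile_congr {D D' : Finset ℕ} {w : ℕ} (h : ∀ u, w < u → (u ∈ D ↔ u ∈ D')) :
    profile φ r D w = profile φ r D' w := by
  have : {u ∈ D | w < u} = {u ∈ D' | w < u} := by
    ext u
    simp only [mem_filter]
    exact and_congr_left (h u)
  simp only [profile, this]

lemma IsColexMinimal.profile_lt_profile {D D' : Finset ℕ} (hD' : IsColexMinimal φ r D') {x w : ℕ}
    (hx : x ∈ D') (hxD : x ∉ D) (hagree : ∀ u, x < u → (u ∈ D ↔ u ∈ D')) (hwx : w < x) :
    profile φ r D w < profile φ r D' x := by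
  refine lt_of_le_of_lt (card_le_card (colourSet_mono φ r fun u hu ↦ ?_))
    (hD'.card_colourSet_lt_profile hx (B := range x ∪ {u ∈ D' | x < u}) subset_rfl)
  simp only [mem_union, mem_range, mem_filter] at hu ⊢
  rcases hu with hu | ⟨huD, -⟩
  · exact Or.inl (by omega)
  · obtain hux | hxu := lt_or_gt_of_ne (ne_of_mem_of_not_mem huD hxD)
    exacts [Or.inl hux, Or.inr ⟨(hagree u hxu).1 huD, hxu⟩]

variable (φ r) in
def profiles (D : Finset ℕ) : Multiset ℕ := D.val.map (profile φ r D)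

lemma IsColexMinimal.eq_of_profiles_eq {D D' : Finset ℕ} (hD : IsColexMinimal φ r D)
    (hD' : IsColexMinimal φ r D') (h : profiles φ r D = profiles φ r D') : D = D' := by
  by_contra hne
  wlog hlt : toColex D < toColex D' generalizing D D'
  · exact this hD' hD h.symm (Ne.symm hne)
      ((not_lt.1 hlt).lt_of_ne (toColex_inj.not.2 (Ne.symm hne)))
  obtain ⟨x, hx, hT⟩ := Colex.lt_iff_exists_filter_lt.1 hlt
  rw [mem_sdiff] at hx
  have hagree : ∀ u, x < u → (u ∈ D ↔ u ∈ D') := fun u hu ↦ by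
    simpa [hu] using Finset.ext_iff.1 hT u
  set v := profile φ r D' x
  -- the profiles `≥ v` of `D` are those of `D'` above `x`, and `D'` has one more, at `x`
  have hcount : {w ∈ D | v ≤ profile φ r D w} = {w ∈ D' | x < w ∧ v ≤ profile φ r D' w} := by
    ext w
    simp only [mem_filter]
    obtain hwx | rfl | hxw := lt_trichotomy w x
    · exact iff_of_false (fun h ↦ (hD'.profile_lt_profile hx.1 hx.2 hagree hwx).not_ge h.2)
        fun h ↦ hwx.not_gt h.2.1
    · simp [hx.2]
    · rw [profile_congr fun u hu ↦ hagree u (hxw.trans hu), hagree w hxw]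
      simp [hxw]
  have hD'_sub : insert x {w ∈ D' | x < w ∧ v ≤ profile φ r D' w} ⊆
      {w ∈ D' | v ≤ profile φ r D' w} :=
    insert_subset (mem_filter.2 ⟨hx.1, le_rfl⟩) fun w hw ↦
      mem_filter.2 ⟨(mem_filter.1 hw).1, (mem_filter.1 hw).2.2⟩
  have hcard : #{w ∈ D | v ≤ profile φ r D w} = #{w ∈ D' | v ≤ profile φ r D' w} := by
    have := congrArg (Multiset.countP (v ≤ ·)) h
    simp only [profiles, Multiset.countP_map] at this
    exact this
  have := card_le_card hD'_sub
  rw [card_insert_of_notMem (by simp), ← hcount, hcard] at this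
  omega

theorem card_le_choose_of_card_colourSet_mem {V : Finset ℕ} (hV : ∀ B, #(colourSet φ r B) ∈ V)
    {s : Finset α} (hs : ∀ c ∈ s, ∃ E, #E ≤ r ∧ φ E = c) : #s ≤ (#V + r).choose r := by
  have hrep : ∀ c ∈ s, ∃ D, φ D = c ∧ IsColexMinimal φ r D := fun c hc ↦ by
    obtain ⟨E, hE, rfl⟩ := hs c hc
    exact exists_isColexMinimal φ r hE
  choose! rep hrep_eq hrep_min using hrep
  let M : Finset (Multiset ℕ) := (range (r + 1)).biUnion fun j ↦ (V.sym j).image (↑)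
  have hmaps : Set.MapsTo (fun c ↦ profiles φ r (rep c)) s M := by
    intro c hc
    simp only [M, coe_biUnion, coe_range, Set.mem_Iio, Set.mem_iUnion, coe_image, Set.mem_image,
      mem_coe, mem_sym_iff]
    refine ⟨#(rep c), Nat.lt_succ_of_le (hrep_min c hc).1,
      ⟨profiles φ r (rep c), Multiset.card_map _ _⟩, fun a ha ↦ ?_, rfl⟩
    obtain ⟨w, -, rfl⟩ := Multiset.mem_map.1 (Sym.mem_coe.2 ha)
    exact hV _
  have hinj : Set.InjOn (fun c ↦ profiles φ r (rep c)) s := fun c hc c' hc' h ↦ by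
    rw [← hrep_eq c hc, ← hrep_eq c' hc', (hrep_min c hc).eq_of_profiles_eq (hrep_min c' hc') h]
  calc #s ≤ #M := card_le_card_of_injOn _ hmaps hinj
    _ ≤ ∑ j ∈ range (r + 1), #(V.sym j) :=
      card_biUnion_le.trans (sum_le_sum fun j _ ↦ card_image_le)
    _ = (#V + r).choose r := by
      rw [sum_congr rfl fun j _ ↦ card_sym V j, Nat.sum_range_multichoose, add_comm,
        Nat.choose_symm_add]

end Counting

lemma Fdelta_subset_Iic {r k : ℕ} {Δ : Finset ℕ → ℕ} (hΔ : ∀ e : Finset ℕ, #e = r → Δ e ∈ Icc 1 k) :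
    Fdelta r Δ ⊆ Set.Iic k := by
  rintro _ ⟨X, -, rfl⟩
  calc gamma r Δ X ≤ (↑(Icc 1 k) : Set ℕ).ncard :=
        Set.ncard_le_ncard (by rintro _ ⟨e, ⟨-, he⟩, rfl⟩; exact hΔ e he) (finite_toSet _)
    _ = k := by simp

lemma rpow_one_div_le_of_le_choose {k m r : ℕ} (hr : 0 < r) (hk : k ≤ (m + r).choose r) :
    ((r.factorial * k : ℕ) : ℝ) ^ ((1 : ℝ) / r) ≤ m + r := by
  have h : r.factorial * k ≤ (m + r) ^ r :=
    calc r.factorial * k ≤ r.factorial * (m + r).choose r := Nat.mul_le_mul_left _ hk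
      _ = (m + r).descFactorial r := (Nat.descFactorial_eq_factorial_mul_choose _ _).symm
      _ ≤ (m + r) ^ r := Nat.descFactorial_le_pow _ _
  rw [one_div, Real.rpow_inv_le_iff_of_pos (by positivity) (by positivity) (by positivity),
    Real.rpow_natCast]
  exact_mod_cast h

/-- For every `r ≥ 2` there is a constant `C_r` such that every surjective colouring
`Δ : ℕ^(r) ↠ [k]` satisfies `|F_Δ| ≥ (r!·k)^(1/r) - C_r`. -/
theorem Fdelta_card_lower_bound (r : ℕ) (hr : 2 ≤ r) :
    ∃ C : ℝ, ∀ (k : ℕ), 1 ≤ k → ∀ Δ : Finset ℕ → ℕ, IsColouring r k Δ →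
      ((Nat.factorial r * k : ℕ) : ℝ) ^ ((1 : ℝ) / (r : ℝ)) - C ≤ ((Fdelta r Δ).ncard : ℝ) := by
  refine ⟨r, fun k _ Δ hΔ ↦ ?_⟩
  obtain ⟨φ, hφΔ, hφ⟩ := exists_canonical_colouring (Δ := Δ) (r := r) (finite_toSet (Icc 1 k))
    fun e he ↦ mem_coe.2 (hΔ.1 e he)
  have hfin : (Fdelta r Δ).Finite := (Set.finite_Iic k).subset (Fdelta_subset_Iic hΔ.1)
  have hV : ∀ B, #(colourSet φ r B) ∈ hfin.toFinset := fun B ↦ by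
    obtain ⟨X, hX, hXB⟩ := hφ B
    exact hfin.mem_toFinset.2 ⟨X, hX, by rw [gamma, hXB, Set.ncard_coe_finset]⟩
  have hk : k ≤ ((Fdelta r Δ).ncard + r).choose r := by
    have := card_le_choose_of_card_colourSet_mem hV (s := Icc 1 k) fun c hc ↦
      let ⟨e, he, hec⟩ := hΔ.2 c hc
      ⟨e, he.le, (hφΔ e he).trans hec⟩
    rwa [Nat.card_Icc, Nat.add_sub_cancel, ← Set.ncard_eq_toFinset_card _ hfin] at this
  linarith [rpow_one_div_le_of_le_choose (by omega : 0 < r) hk]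
end
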